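/- Let m ≥ 3 be odd and p ≥ 2m. Define Q_m(z₁,…,z_m) = z₃⋯z_m(z₁² - z₂² + c z₁z₂) for real c ≥ 0. Then ‖Q_m‖ ≤ ‖Q_{m-1}‖ ≤ 2^(-(m-3)/p)(4 + c²)^(1/2), where norms are sup norms over the respective ℓ_p unit balls. -/

import Mathlib

/-!
Dropping the last coordinate of a point of the `ℓ_p^m` unit ball gives a point of the
`ℓ_p^(m-1)` ball, and the dropped factor `z_m` of `Q_m` has modulus at most `1`.

For the bound on `Q_k`, first `|z₁² - z₂² + c z₁ z₂| ≤ √(4 + c²) (|z₁|² + |z₂|²) / 2`.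
With `t_i = |z_i|^p`, convexity of `x ↦ x^(p/2)` gives `((|z₁|² + |z₂|²) / 2)^p ≤ s²` for
`s = (t₁ + t₂) / 2`, and AM-GM for the `k` numbers `s, s, t₃, …, t_k`, whose sum is at most `1`,
bounds `|Q_k(z)|^p` by `k^(-k) ≤ 2^(-(k-2))`.
-/

open Finset

/-- `Q_k` of the paper, with coordinates indexed from `0`. -/
def polyQ (c : ℝ) {k : ℕ} (hk : 2 ≤ k) (z : Fin k → ℂ) : ℂ :=
  (∏ i ∈ univ.filter (fun i : Fin k => 2 ≤ (i : ℕ)), z i) *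
    (z ⟨0, by omega⟩ ^ 2 - z ⟨1, by omega⟩ ^ 2 + (c : ℂ) * z ⟨0, by omega⟩ * z ⟨1, by omega⟩)

noncomputable def lpBallSup (p : ℝ) {k : ℕ} (f : (Fin k → ℂ) → ℂ) : ℝ :=
  sSup {y : ℝ | ∃ z : Fin k → ℂ, (∑ i, ‖z i‖ ^ p) ≤ 1 ∧ y = ‖f z‖}

lemma norm_sq_sub_sq_add_mul_le (c : ℝ) (a b : ℂ) :
    ‖a ^ 2 - b ^ 2 + (c : ℂ) * a * b‖ ≤ Real.sqrt (4 + c ^ 2) * ((‖a‖ ^ 2 + ‖b‖ ^ 2) / 2) := by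
  rw [← pow_le_pow_iff_left₀ (norm_nonneg _) (by positivity) two_ne_zero, mul_pow,
    Real.sq_sqrt (by positivity)]
  simp only [Complex.sq_norm, Complex.normSq_apply]
  simp only [Complex.add_re, Complex.add_im, Complex.sub_re, Complex.sub_im, Complex.mul_re,
    Complex.mul_im, pow_two, Complex.ofReal_re, Complex.ofReal_im]
  nlinarith [sq_nonneg (c * ((a.re ^ 2 + a.im ^ 2) - (b.re ^ 2 + b.im ^ 2))
      - 4 * (a.re * b.re + a.im * b.im))]

lemma add_div_two_rpow_le {x y q : ℝ} (hx : 0 ≤ x) (hy : 0 ≤ y) (hq : 1 ≤ q) :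
    ((x + y) / 2) ^ q ≤ (x ^ q + y ^ q) / 2 := by
  have h := (convexOn_rpow hq).2 hx hy (by norm_num : (0 : ℝ) ≤ 1 / 2)
    (by norm_num : (0 : ℝ) ≤ 1 / 2) (by norm_num)
  simp only [smul_eq_mul] at h
  calc ((x + y) / 2) ^ q = (1 / 2 * x + 1 / 2 * y) ^ q := by ring_nf
    _ ≤ 1 / 2 * x ^ q + 1 / 2 * y ^ q := h
    _ = (x ^ q + y ^ q) / 2 := by ring

lemma add_sq_div_two_rpow_le {a b p : ℝ} (ha : 0 ≤ a) (hb : 0 ≤ b) (hp : 2 ≤ p) :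
    ((a ^ 2 + b ^ 2) / 2) ^ p ≤ ((a ^ p + b ^ p) / 2) ^ 2 := by
  have sq_rpow : ∀ x : ℝ, 0 ≤ x → (x ^ 2) ^ (p / 2) = x ^ p := fun x hx => by
    rw [← Real.rpow_natCast_mul hx]; congr 1; push_cast; ring
  have hM : 0 ≤ (a ^ 2 + b ^ 2) / 2 := by positivity
  calc ((a ^ 2 + b ^ 2) / 2) ^ p = (((a ^ 2 + b ^ 2) / 2) ^ (p / 2)) ^ 2 := by
        rw [← Real.rpow_mul_natCast hM]; norm_num
    _ ≤ ((a ^ p + b ^ p) / 2) ^ 2 := by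
        gcongr
        rw [← sq_rpow a ha, ← sq_rpow b hb]
        exact add_div_two_rpow_le (sq_nonneg a) (sq_nonneg b) (by linarith)

lemma prod_le_inv_card_pow_of_sum_le_one {ι : Type*} [Fintype ι] {u : ι → ℝ}
    (hu : ∀ i, 0 ≤ u i) (hsum : ∑ i, u i ≤ 1) :
    ∏ i, u i ≤ ((Fintype.card ι : ℝ)⁻¹) ^ Fintype.card ι := by
  obtain _ | _ := isEmpty_or_nonempty ι
  · simp
  have hn : (0 : ℝ) < Fintype.card ι := by exact_mod_cast Fintype.card_pos
  have amgm := Real.geom_mean_le_arith_mean univ (fun _ => (1 : ℝ)) u (by simp)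
    (by simpa using hn) (fun i _ => hu i)
  simp only [Real.rpow_one, sum_const, card_univ, nsmul_eq_mul, mul_one, one_mul] at amgm
  have hroot : (∏ i, u i) ^ (Fintype.card ι : ℝ)⁻¹ ≤ (Fintype.card ι : ℝ)⁻¹ :=
    amgm.trans (by rw [div_eq_inv_mul]; exact mul_le_of_le_one_right (by positivity) hsum)
  rwa [Real.rpow_inv_le_iff_of_pos (prod_nonneg fun i _ => hu i) (by positivity) hn,
    Real.rpow_natCast] at hroot

@[to_additive]
lemma Fin.prod_univ_eq_prod_filter_two_le_mul {M : Type*} [CommMonoid M] {k : ℕ} (hk : 2 ≤ k)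
    (f : Fin k → M) :
    ∏ i, f i = (∏ i ∈ univ.filter (fun i : Fin k => 2 ≤ (i : ℕ)), f i) *
      (f ⟨0, by omega⟩ * f ⟨1, by omega⟩) := by
  rw [← prod_filter_mul_prod_filter_not univ (fun i : Fin k => 2 ≤ (i : ℕ))]
  have hlow : univ.filter (fun i : Fin k => ¬ 2 ≤ (i : ℕ)) = {⟨0, by omega⟩, ⟨1, by omega⟩} := by
    ext i
    simp only [mem_filter, mem_univ, true_and, mem_insert, mem_singleton, Fin.ext_iff]
    omega
  rw [hlow, prod_pair (by simp [Fin.ext_iff])]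

lemma inv_pow_self_le_two_rpow {k : ℕ} (hk : 2 ≤ k) :
    ((k : ℝ)⁻¹) ^ k ≤ (2 : ℝ) ^ (-((k : ℝ) - 2)) := by
  have hcast : (k : ℝ) - 2 = ((k - 2 : ℕ) : ℝ) := by rw [Nat.cast_sub hk]; norm_num
  rw [Real.rpow_neg zero_le_two, inv_pow, hcast, Real.rpow_natCast]
  refine inv_anti₀ (by positivity) ?_
  exact_mod_cast (Nat.pow_le_pow_right two_pos (Nat.sub_le k 2)).trans (Nat.pow_le_pow_left hk k)

lemma prod_filter_mul_sq_add_div_two_le {k : ℕ} (hk : 2 ≤ k) {t : Fin k → ℝ}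
    (ht : ∀ i, 0 ≤ t i) (hsum : ∑ i, t i ≤ 1) :
    (∏ i ∈ univ.filter (fun i : Fin k => 2 ≤ (i : ℕ)), t i) *
      ((t ⟨0, by omega⟩ + t ⟨1, by omega⟩) / 2) ^ 2 ≤ ((k : ℝ)⁻¹) ^ k := by
  set s := (t ⟨0, by omega⟩ + t ⟨1, by omega⟩) / 2
  set u : Fin k → ℝ := fun i => if 2 ≤ (i : ℕ) then t i else s
  have hu_high : ∀ i ∈ univ.filter (fun i : Fin k => 2 ≤ (i : ℕ)), u i = t i :=
    fun i hi => if_pos (mem_filter.1 hi).2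
  have hu0 : u ⟨0, by omega⟩ = s := if_neg (by norm_num)
  have hu1 : u ⟨1, by omega⟩ = s := if_neg (by norm_num)
  have hsum_u : ∑ i, u i = ∑ i, t i := by
    rw [Fin.sum_univ_eq_sum_filter_two_le_add hk, Fin.sum_univ_eq_sum_filter_two_le_add hk,
      sum_congr rfl hu_high, hu0, hu1]
    ring
  have hprod_u : ∏ i, u i = (∏ i ∈ univ.filter (fun i : Fin k => 2 ≤ (i : ℕ)), t i) * s ^ 2 := by
    rw [Fin.prod_univ_eq_prod_filter_two_le_mul hk, prod_congr rfl hu_high, hu0, hu1]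
    ring
  have hu : ∀ i, 0 ≤ u i := fun i => by
    simp only [u]; split_ifs
    · exact ht i
    · exact div_nonneg (add_nonneg (ht _) (ht _)) zero_le_two
  simpa [hprod_u] using prod_le_inv_card_pow_of_sum_le_one hu (hsum_u ▸ hsum)

lemma prod_filter_mul_sq_add_sq_div_two_le {k : ℕ} (hk : 2 ≤ k) {p : ℝ} (hp : 2 ≤ p)
    {a : Fin k → ℝ} (ha : ∀ i, 0 ≤ a i) (hsum : ∑ i, a i ^ p ≤ 1) :
    (∏ i ∈ univ.filter (fun i : Fin k => 2 ≤ (i : ℕ)), a i) *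
      ((a ⟨0, by omega⟩ ^ 2 + a ⟨1, by omega⟩ ^ 2) / 2) ≤ 2 ^ (-((k : ℝ) - 2) / p) := by
  have hp0 : 0 < p := by linarith
  have hprod : 0 ≤ ∏ i ∈ univ.filter (fun i : Fin k => 2 ≤ (i : ℕ)), a i :=
    prod_nonneg fun i _ => ha i
  have hmean : 0 ≤ (a ⟨0, by omega⟩ ^ 2 + a ⟨1, by omega⟩ ^ 2) / 2 := by positivity
  have hpow : ((∏ i ∈ univ.filter (fun i : Fin k => 2 ≤ (i : ℕ)), a i) *
      ((a ⟨0, by omega⟩ ^ 2 + a ⟨1, by omega⟩ ^ 2) / 2)) ^ p ≤ 2 ^ (-((k : ℝ) - 2)) :=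
    calc _ = (∏ i ∈ univ.filter (fun i : Fin k => 2 ≤ (i : ℕ)), a i ^ p) *
          ((a ⟨0, by omega⟩ ^ 2 + a ⟨1, by omega⟩ ^ 2) / 2) ^ p := by
          rw [Real.mul_rpow hprod hmean, Real.finsetProd_rpow _ _ fun i _ => ha i]
      _ ≤ (∏ i ∈ univ.filter (fun i : Fin k => 2 ≤ (i : ℕ)), a i ^ p) *
          ((a ⟨0, by omega⟩ ^ p + a ⟨1, by omega⟩ ^ p) / 2) ^ 2 := by
          gcongr
          · exact prod_nonneg fun i _ => Real.rpow_nonneg (ha i) p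
          · exact add_sq_div_two_rpow_le (ha _) (ha _) hp
      _ ≤ ((k : ℝ)⁻¹) ^ k :=
          prod_filter_mul_sq_add_div_two_le hk (fun i => Real.rpow_nonneg (ha i) p) hsum
      _ ≤ 2 ^ (-((k : ℝ) - 2)) := inv_pow_self_le_two_rpow hk
  rw [div_eq_mul_inv (-((k : ℝ) - 2)), Real.rpow_mul zero_le_two]
  exact (Real.le_rpow_inv_iff_of_pos (mul_nonneg hprod hmean) (by positivity) hp0).2 hpow

lemma norm_polyQ_le (c : ℝ) {k : ℕ} (hk : 2 ≤ k) {p : ℝ} (hp : 2 ≤ p) {z : Fin k → ℂ}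
    (hz : ∑ i, ‖z i‖ ^ p ≤ 1) :
    ‖polyQ c hk z‖ ≤ 2 ^ (-((k : ℝ) - 2) / p) * Real.sqrt (4 + c ^ 2) := by
  rw [polyQ, norm_mul, norm_prod]
  calc _ ≤ (∏ i ∈ univ.filter (fun i : Fin k => 2 ≤ (i : ℕ)), ‖z i‖) *
        (Real.sqrt (4 + c ^ 2) * ((‖z ⟨0, by omega⟩‖ ^ 2 + ‖z ⟨1, by omega⟩‖ ^ 2) / 2)) :=
        mul_le_mul_of_nonneg_left (norm_sq_sub_sq_add_mul_le c _ _)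
          (prod_nonneg fun i _ => norm_nonneg _)
    _ = (∏ i ∈ univ.filter (fun i : Fin k => 2 ≤ (i : ℕ)), ‖z i‖) *
        ((‖z ⟨0, by omega⟩‖ ^ 2 + ‖z ⟨1, by omega⟩‖ ^ 2) / 2) * Real.sqrt (4 + c ^ 2) := by
        ring
    _ ≤ _ := mul_le_mul_of_nonneg_right
        (prod_filter_mul_sq_add_sq_div_two_le hk hp (fun i => norm_nonneg (z i)) hz)
        (Real.sqrt_nonneg _)

lemma norm_le_one_of_sum_rpow_norm_le_one {ι E : Type*} [Fintype ι] [SeminormedAddGroup E]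
    {p : ℝ} (hp : 0 < p) {z : ι → E} (hz : ∑ i, ‖z i‖ ^ p ≤ 1) (i : ι) : ‖z i‖ ≤ 1 :=
  le_of_not_gt fun h => (Real.one_lt_rpow h hp).not_ge <|
    (single_le_sum (fun j _ => Real.rpow_nonneg (norm_nonneg (z j)) p) (mem_univ i)).trans hz

lemma sum_rpow_norm_comp_castLE_le {n m : ℕ} (hnm : n ≤ m) (p : ℝ) (z : Fin m → ℂ) :
    ∑ i, ‖(z ∘ Fin.castLE hnm) i‖ ^ p ≤ ∑ i, ‖z i‖ ^ p := by
  calc _ = ∑ j ∈ univ.map (Fin.castLEEmb hnm), ‖z j‖ ^ p := (sum_map _ _ _).symm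
    _ ≤ _ := sum_le_sum_of_subset_of_nonneg (subset_univ _)
        fun j _ _ => Real.rpow_nonneg (norm_nonneg _) p

lemma norm_polyQ_le_norm_polyQ_comp_castLE (c : ℝ) {n m : ℕ} (hn : 2 ≤ n) (hnm : n ≤ m)
    {z : Fin m → ℂ} (hz : ∀ i, ‖z i‖ ≤ 1) :
    ‖polyQ c (hn.trans hnm) z‖ ≤ ‖polyQ c hn (z ∘ Fin.castLE hnm)‖ := by
  simp only [polyQ, norm_mul, norm_prod]
  gcongr ?_ * _
  refine (prod_le_prod_of_subset_of_le_one ?_ (fun j _ => norm_nonneg _) fun j _ _ => hz j).trans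
    (prod_map _ (Fin.castLEEmb hnm) fun j => ‖z j‖).le
  intro j hj
  simp only [mem_map, mem_filter, mem_univ, true_and] at hj ⊢
  obtain ⟨i, hi, rfl⟩ := hj
  exact hi

lemma lpBallSup_nonneg (p : ℝ) {k : ℕ} (f : (Fin k → ℂ) → ℂ) : 0 ≤ lpBallSup p f :=
  Real.sSup_nonneg <| by rintro _ ⟨z, -, rfl⟩; exact norm_nonneg _

lemma lpBallSup_le {p C : ℝ} {k : ℕ} {f : (Fin k → ℂ) → ℂ} (hC : 0 ≤ C)
    (h : ∀ z : Fin k → ℂ, ∑ i, ‖z i‖ ^ p ≤ 1 → ‖f z‖ ≤ C) : lpBallSup p f ≤ C :=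
  Real.sSup_le (by rintro _ ⟨z, hz, rfl⟩; exact h z hz) hC

lemma norm_le_lpBallSup {p C : ℝ} {k : ℕ} {f : (Fin k → ℂ) → ℂ}
    (h : ∀ z : Fin k → ℂ, ∑ i, ‖z i‖ ^ p ≤ 1 → ‖f z‖ ≤ C) {z : Fin k → ℂ}
    (hz : ∑ i, ‖z i‖ ^ p ≤ 1) : ‖f z‖ ≤ lpBallSup p f :=
  le_csSup ⟨C, by rintro _ ⟨w, hw, rfl⟩; exact h w hw⟩ ⟨z, hz, rfl⟩

lemma lpBallSup_polyQ_le (c : ℝ) {k : ℕ} (hk : 2 ≤ k) {p : ℝ} (hp : 2 ≤ p) :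
    lpBallSup p (polyQ c hk) ≤ 2 ^ (-((k : ℝ) - 2) / p) * Real.sqrt (4 + c ^ 2) :=
  lpBallSup_le (by positivity) fun _ => norm_polyQ_le c hk hp

lemma lpBallSup_polyQ_le_of_le (c : ℝ) {n m : ℕ} (hn : 2 ≤ n) (hnm : n ≤ m) {p : ℝ}
    (hp : 2 ≤ p) : lpBallSup p (polyQ c (hn.trans hnm)) ≤ lpBallSup p (polyQ c hn) :=
  lpBallSup_le (lpBallSup_nonneg _ _) fun z hz =>
    (norm_polyQ_le_norm_polyQ_comp_castLE c hn hnm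
      (norm_le_one_of_sum_rpow_norm_le_one (by linarith) hz)).trans
    (norm_le_lpBallSup (fun _ => norm_polyQ_le c hn hp)
      ((sum_rpow_norm_comp_castLE_le hnm p z).trans hz))

theorem stmt_18 (m : ℕ) (hm : 3 ≤ m) (p : ℝ) (hp : 2 * (m : ℝ) ≤ p)
    (c : ℝ) :
    sSup {y : ℝ | ∃ z : Fin m → ℂ, (∑ i, ‖z i‖ ^ p) ≤ 1 ∧
        y = ‖(∏ i ∈ Finset.univ.filter (fun i : Fin m => 2 ≤ (i : ℕ)), z i) *
              ((z ⟨0, by omega⟩) ^ 2 - (z ⟨1, by omega⟩) ^ 2 +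
                (c : ℂ) * z ⟨0, by omega⟩ * z ⟨1, by omega⟩)‖} ≤
    sSup {y : ℝ | ∃ z : Fin (m - 1) → ℂ, (∑ i, ‖z i‖ ^ p) ≤ 1 ∧
        y = ‖(∏ i ∈ Finset.univ.filter (fun i : Fin (m - 1) => 2 ≤ (i : ℕ)), z i) *
              ((z ⟨0, by omega⟩) ^ 2 - (z ⟨1, by omega⟩) ^ 2 +
                (c : ℂ) * z ⟨0, by omega⟩ * z ⟨1, by omega⟩)‖} ∧
    sSup {y : ℝ | ∃ z : Fin (m - 1) → ℂ, (∑ i, ‖z i‖ ^ p) ≤ 1 ∧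
        y = ‖(∏ i ∈ Finset.univ.filter (fun i : Fin (m - 1) => 2 ≤ (i : ℕ)), z i) *
              ((z ⟨0, by omega⟩) ^ 2 - (z ⟨1, by omega⟩) ^ 2 +
                (c : ℂ) * z ⟨0, by omega⟩ * z ⟨1, by omega⟩)‖} ≤
      (2 : ℝ) ^ (-((m : ℝ) - 3) / p) * Real.sqrt (4 + c ^ 2) := by
  have hk : 2 ≤ m - 1 := by omega
  have hp2 : 2 ≤ p := by
    have : (3 : ℝ) ≤ m := by exact_mod_cast hm
    linarith
  have hdim : ((m - 1 : ℕ) : ℝ) - 2 = (m : ℝ) - 3 := by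
    rw [Nat.cast_sub (by omega : 1 ≤ m)]; ring
  change lpBallSup p (polyQ c (hk.trans (Nat.sub_le m 1))) ≤ lpBallSup p (polyQ c hk) ∧
    lpBallSup p (polyQ c hk) ≤ _
  exact ⟨lpBallSup_polyQ_le_of_le c hk (Nat.sub_le m 1) hp2,
    hdim ▸ lpBallSup_polyQ_le c hk hp2⟩
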